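/- arXiv:2009.11754 — 4 statements merged into one kernel-verified Lean document; each statement's English description precedes it below -/
import Mathlib

section
/- Let L be a positive integer divisible by 5 with L ≥ 5, and let S be any 4-element subset of {0, L/5, 2L/5, 3L/5, 4L/5} ⊆ ZMod L. Then the set of nonzero differences D(S) = { a - b : a, b ∈ S, a ≠ b } has cardinality exactly 4. -/
/-- The set of nonzero differences of a finite subset of `ZMod L`. -/
def diffs {L : ℕ} (S : Finset (ZMod L)) : Finset (ZMod L) :=
  ((S ×ˢ S).filter fun p => p.1 ≠ p.2).image fun p => p.1 - p.2

lemma zmod5_diffs : ∀ S₀ : Finset (ZMod 5), S₀.card = 4 → (diffs S₀).card = 4 := by decide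

lemma diffs_image {L M : ℕ} (φ : ZMod M →+ ZMod L) (hinj : Function.Injective φ)
    (S₀ : Finset (ZMod M)) : diffs (S₀.image φ) = (diffs S₀).image φ := by
  unfold diffs
  ext d
  simp only [Finset.mem_image, Finset.mem_filter, Finset.mem_product]
  constructor
  · rintro ⟨⟨x, y⟩, ⟨⟨⟨a, ha, rfl⟩, ⟨b, hb, rfl⟩⟩, hne⟩, rfl⟩
    exact ⟨a - b, ⟨⟨a, b⟩, ⟨⟨ha, hb⟩, fun h => hne (congrArg φ h)⟩, rfl⟩, map_sub φ a b⟩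
  · rintro ⟨e, ⟨⟨a, b⟩, ⟨⟨ha, hb⟩, hne⟩, rfl⟩, rfl⟩
    exact ⟨(φ a, φ b), ⟨⟨⟨a, ha, rfl⟩, ⟨b, hb, rfl⟩⟩, fun h => hne (hinj h)⟩, (map_sub φ a b).symm⟩

theorem stmt6 (L : ℕ) (hL : 0 < L) (h5 : 5 ∣ L) (hL5 : 5 ≤ L)
    (S : Finset (ZMod L))
    (hsub : S ⊆ ({(0 : ZMod L), ((L / 5 : ℕ) : ZMod L), ((2 * (L / 5) : ℕ) : ZMod L),
      ((3 * (L / 5) : ℕ) : ZMod L), ((4 * (L / 5) : ℕ) : ZMod L)} : Finset (ZMod L)))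
    (hcard : S.card = 4) :
    (diffs S).card = 4 := by
  haveI : NeZero L := ⟨hL.ne'⟩
  set n := L / 5 with hn
  have hLn : 5 * n = L := Nat.mul_div_cancel' h5
  have hn1 : 1 ≤ n := by omega
  have h5a : (5 : ℤ) • ((n : ZMod L)) = 0 := by
    have : ((5 * n : ℕ) : ZMod L) = 0 := by rw [hLn]; exact ZMod.natCast_self L
    rw [zsmul_eq_mul]
    push_cast at this ⊢
    linear_combination this
  set φ : ZMod 5 →+ ZMod L := ZMod.lift 5 ⟨zmultiplesHom (ZMod L) ((n : ZMod L)), h5a⟩ with hφ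
  have hφk : ∀ k : ℕ, φ (k : ZMod 5) = ((k * n : ℕ) : ZMod L) := by
    intro k
    have : ((k : ℤ) : ZMod 5) = (k : ZMod 5) := by push_cast; ring
    rw [hφ, ← this, ZMod.lift_coe]
    simp only [zmultiplesHom_apply]
    rw [zsmul_eq_mul]
    push_cast
    ring
  have hinj : Function.Injective φ := by
    rw [injective_iff_map_eq_zero]
    intro x hx
    have hxval : ((x.val : ℕ) : ZMod 5) = x := ZMod.natCast_rightInverse x
    rw [← hxval, hφk] at hx
    have hdvd : L ∣ x.val * n := (ZMod.natCast_eq_zero_iff _ _).mp hx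
    have hlt : x.val * n < L := by
      have := x.val_lt
      calc x.val * n ≤ 4 * n := Nat.mul_le_mul_right n (by omega)
        _ < 5 * n := by omega
        _ = L := hLn
    have : x.val * n = 0 := Nat.eq_zero_of_dvd_of_lt hdvd hlt
    have hv0 : x.val = 0 := by
      rcases Nat.mul_eq_zero.mp this with h | h
      · exact h
      · omega
    rw [← hxval, hv0]; rfl
  -- S₀ : preimage of S in ZMod 5
  set S₀ : Finset (ZMod 5) := Finset.univ.filter (fun k => φ k ∈ S) with hS₀
  have hSim : S₀.image φ = S := by
    apply Finset.Subset.antisymm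
    · intro x hx
      rcases Finset.mem_image.mp hx with ⟨k, hk, rfl⟩
      exact (Finset.mem_filter.mp hk).2
    · intro x hx
      have hT := hsub hx
      simp only [Finset.mem_insert, Finset.mem_singleton] at hT
      have key : ∃ k : ZMod 5, φ k = x := by
        rcases hT with h | h | h | h | h
        · exact ⟨0, by rw [h]; exact map_zero φ⟩
        · exact ⟨(1 : ℕ), by rw [hφk, h]; norm_num⟩
        · exact ⟨(2 : ℕ), by rw [hφk, h]⟩
        · exact ⟨(3 : ℕ), by rw [hφk, h]⟩
        · exact ⟨(4 : ℕ), by rw [hφk, h]⟩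
      rcases key with ⟨k, rfl⟩
      exact Finset.mem_image_of_mem φ (Finset.mem_filter.mpr ⟨Finset.mem_univ k, hx⟩)
  have hcard₀ : S₀.card = 4 := by
    rw [← hcard, ← hSim, Finset.card_image_of_injective _ hinj]
  rw [← hSim, diffs_image φ hinj, Finset.card_image_of_injective _ hinj]
  exact zmod5_diffs S₀ hcard₀
end

section
/- Let M ≥ 4 and L ≥ 2 be integers, and let C be an MC-CAC(M, L, 4). Then |C| ≤ ⌊(M/12)·(ML + L - 2 + 2J)⌋, where J = e₂ + 2e₃ + 2e₄ + 2e₅ and e_k = 1 if k divides L and 0 otherwise (for k = 2, 3, 4, 5). -/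
/-!
Each codeword `S` determines its pattern: the triples `(i, j, y - x)` over ordered pairs of
distinct points `(i, x)`, `(j, y)` of `S`. A triple shared by the patterns of `S` and `T` gives a
cyclic shift carrying two points of `S` into `T`, so the correlation condition makes the patterns
of distinct codewords disjoint; and no pattern contains a triple `(i, i, 0)`.

Weight `(i, j, δ)` by `1` if `i ≠ j` and by `diffWeight δ` if `i = j`. A channel holding `n` points
of a four-point codeword contributes at least `3 n`: its own weighted difference set weighs at least
`0, 4, 6, 12` for `n = 1, 2, 3, 4`, and for `n < 4` it sees at least `max n (4 - n)` triples towards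
other channels. So every pattern weighs at least `12`, while all triples other than the `(i, i, 0)`
weigh `M (M L + L - 2 + 2 J)` together.

The bound `12` for four points in one channel is the heart of the matter. Unless they have six
distinct differences, some difference `δ` occurs three times, and then the points contain
`x, x + δ, y, y + δ` with `2 δ = 0`, or `x, x + δ, x + 2 δ` with `3 δ = 0`, or an arithmetic
progression `x, …, x + 3 δ`; each configuration produces enough differences of small order.
-/

/-- A multichannel conflict-avoiding code MC-CAC(M, L, w): a set of scheduling
patterns (supports of `M × L` zero-one arrays) of weight `w` such that every
cyclic-shift cross-correlation between two distinct codewords is at most 1. -/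
def IsMCCAC (M L w : ℕ) (C : Finset (Finset (Fin M × ZMod L))) : Prop :=
  (∀ S ∈ C, S.card = w) ∧
  (∀ S ∈ C, ∀ T ∈ C, S ≠ T → ∀ τ : ZMod L,
    (S.filter fun p => (p.1, p.2 + τ) ∈ T).card ≤ 1)

open Finset

namespace MCCAC

section Differences

variable {L : ℕ}

/-- On `δ ≠ 0` this is `4` if `3 δ = 0` or `4 δ = 0`, else `3` if `5 δ = 0`, else `2`. Writing it
as a sum of indicators makes its total over `ZMod L` a combination of the counts `L.gcd k` of
solutions of `k δ = 0`; its value `7` at `0` only enters through the triples `(i, i, 0)`, which lie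
in no pattern. -/
def diffWeight (δ : ZMod L) : ℕ :=
  2 + 2 * (if 3 * δ = 0 then 1 else 0) + 2 * (if 4 * δ = 0 then 1 else 0)
    + (if 5 * δ = 0 then 1 else 0)

lemma two_le_diffWeight (δ : ZMod L) : 2 ≤ diffWeight δ := by
  unfold diffWeight; omega

lemma four_le_diffWeight_of_three_mul_eq_zero {δ : ZMod L} (h : 3 * δ = 0) :
    4 ≤ diffWeight δ := by
  unfold diffWeight; simp only [if_pos h]; omega

lemma four_le_diffWeight_of_four_mul_eq_zero {δ : ZMod L} (h : 4 * δ = 0) :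
    4 ≤ diffWeight δ := by
  unfold diffWeight; simp only [if_pos h]; omega

lemma three_le_diffWeight_of_five_mul_eq_zero {δ : ZMod L} (h : 5 * δ = 0) :
    3 ≤ diffWeight δ := by
  unfold diffWeight; simp only [if_pos h]; omega

lemma eq_of_two_mul_eq_zero {a b : ZMod L} (ha : 2 * a = 0) (hb : 2 * b = 0) (ha0 : a ≠ 0)
    (hb0 : b ≠ 0) : a = b := by
  rcases L with _ | n
  · exact absurd ((mul_eq_zero.1 ha).resolve_left two_ne_zero) ha0
  by_contra hab
  have hsub : ({0, a, b} : Finset (ZMod (n + 1))) ⊆ univ.filter fun c => 2 • c = 0 := by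
    intro c hc
    simp only [mem_insert, mem_singleton] at hc
    rcases hc with rfl | rfl | rfl <;> simp [*]
  have := (card_le_card hsub).trans (IsAddCyclic.card_nsmul_eq_zero_le two_pos)
  rw [card_eq_three.2 ⟨0, a, b, ha0.symm, hb0.symm, hab, rfl⟩] at this
  omega

def diffs (A : Finset (ZMod L)) : Finset (ZMod L) :=
  A.offDiag.image fun q => q.2 - q.1

variable {A : Finset (ZMod L)} {x y δ : ZMod L}

lemma sub_mem_diffs (hx : x ∈ A) (hy : y ∈ A) (hxy : x ≠ y) : y - x ∈ diffs A :=
  mem_image.2 ⟨(x, y), mem_offDiag.2 ⟨hx, hy, hxy⟩, rfl⟩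

lemma mem_diffs_of_add_mem (hx : x ∈ A) (hxδ : x + δ ∈ A) (hδ : δ ≠ 0) : δ ∈ diffs A := by
  simpa using sub_mem_diffs hx hxδ (by simpa using hδ)

lemma ne_zero_of_mem_diffs (h : δ ∈ diffs A) : δ ≠ 0 := by
  obtain ⟨q, hq, rfl⟩ := mem_image.1 h
  exact sub_ne_zero.2 (mem_offDiag.1 hq).2.2.symm

lemma neg_mem_diffs (h : δ ∈ diffs A) : -δ ∈ diffs A := by
  obtain ⟨q, hq, rfl⟩ := mem_image.1 h
  obtain ⟨h1, h2, h12⟩ := mem_offDiag.1 hq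
  simpa using sub_mem_diffs h2 h1 h12.symm

lemma sum_map_diffWeight_le {l : List (ZMod L)} (hl : l.Nodup) (hA : l.Forall (· ∈ diffs A)) :
    (l.map diffWeight).sum ≤ ∑ δ ∈ diffs A, diffWeight δ := by
  rw [← List.sum_toFinset _ hl]
  exact sum_le_sum_of_subset fun δ hδ =>
    List.forall_iff_forall_mem.1 hA δ (List.mem_toFinset.1 hδ)

lemma four_le_sum_diffWeight_of_one_lt_card (hA : 1 < #A) :
    4 ≤ ∑ δ ∈ diffs A, diffWeight δ := by
  obtain ⟨x, hx, y, hy, hxy⟩ := one_lt_card.1 hA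
  have hd := sub_mem_diffs hx hy hxy
  by_cases h2 : 2 * (y - x) = 0
  · have := sum_map_diffWeight_le (l := [y - x]) (List.nodup_singleton _) hd
    have := four_le_diffWeight_of_four_mul_eq_zero (δ := y - x) (by linear_combination 2 * h2)
    simp only [List.map_cons, List.map_nil, List.sum_cons, List.sum_nil] at *
    omega
  · have hneg : y - x ≠ -(y - x) := fun h => h2 (by linear_combination h)
    have := sum_map_diffWeight_le (l := [y - x, -(y - x)]) (by simpa using hneg)
      ⟨hd, neg_mem_diffs hd⟩
    have := two_le_diffWeight (y - x)
    have := two_le_diffWeight (-(y - x))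
    simp only [List.map_cons, List.map_nil, List.sum_cons, List.sum_nil] at *
    omega

lemma six_le_sum_diffWeight_of_two_mul_mem {a : ZMod L} (ha : a ∈ diffs A)
    (h2a : 2 * a ∈ diffs A) : 6 ≤ ∑ δ ∈ diffs A, diffWeight δ := by
  have h1 := ne_zero_of_mem_diffs ha
  have h2 := ne_zero_of_mem_diffs h2a
  have hneg : a ≠ -a := fun h => h2 (by linear_combination h)
  have := two_le_diffWeight (-a)
  by_cases h3 : 3 * a = 0
  · have := sum_map_diffWeight_le (l := [a, -a]) (by simpa using hneg) ⟨ha, neg_mem_diffs ha⟩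
    have := four_le_diffWeight_of_three_mul_eq_zero h3
    simp only [List.map_cons, List.map_nil, List.sum_cons, List.sum_nil] at *
    omega
  · have := sum_map_diffWeight_le (l := [a, -a, 2 * a])
      (by
        simp only [List.nodup_cons, List.mem_cons, List.not_mem_nil, List.nodup_nil, not_or,
          or_false, not_false_eq_true, and_true]
        exact ⟨⟨hneg, fun h => h1 (by linear_combination -h)⟩,
          fun h => h3 (by linear_combination -h)⟩)
      ⟨ha, neg_mem_diffs ha, h2a⟩
    have := two_le_diffWeight a
    have := two_le_diffWeight (2 * a)
    simp only [List.map_cons, List.map_nil, List.sum_cons, List.sum_nil] at *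
    omega

lemma six_le_sum_diffWeight_of_two_lt_card (hA : 2 < #A) :
    6 ≤ ∑ δ ∈ diffs A, diffWeight δ := by
  obtain ⟨x, hx, y, hy, z, hz, hxy, hxz, hyz⟩ := two_lt_card.1 hA
  have hyx := sub_mem_diffs hx hy hxy
  have hzx := sub_mem_diffs hx hz hxz
  have hab : y - x ≠ z - x := fun h => hyz (by linear_combination h)
  have := two_le_diffWeight (y - x)
  have := two_le_diffWeight (z - x)
  by_cases h2 : 2 * (y - x) = 0
  · have := sum_map_diffWeight_le (l := [y - x, z - x]) (by simpa using hab) ⟨hyx, hzx⟩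
    have := four_le_diffWeight_of_four_mul_eq_zero (δ := y - x) (by linear_combination 2 * h2)
    simp only [List.map_cons, List.map_nil, List.sum_cons, List.sum_nil] at *
    omega
  have hneg : y - x ≠ -(y - x) := fun h => h2 (by linear_combination h)
  by_cases hsym : z - x = -(y - x)
  · refine six_le_sum_diffWeight_of_two_mul_mem hyx ?_
    convert sub_mem_diffs hz hy hyz.symm using 1
    linear_combination hsym
  · have := sum_map_diffWeight_le (l := [y - x, z - x, -(y - x)])
      (by
        simp only [List.nodup_cons, List.mem_cons, List.not_mem_nil, List.nodup_nil, not_or,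
          or_false, not_false_eq_true, and_true]
        exact ⟨⟨hab, hneg⟩, hsym⟩)
      ⟨hyx, hzx, neg_mem_diffs hyx⟩
    have := two_le_diffWeight (-(y - x))
    simp only [List.map_cons, List.map_nil, List.sum_cons, List.sum_nil] at *
    omega

lemma exists_three_le_card_filter_add_mem (hA : #A = 4) (hD : #(diffs A) ≤ 5) :
    ∃ δ ∈ diffs A, 3 ≤ #{x ∈ A | x + δ ∈ A} := by
  have hmaps : ∀ q ∈ A.offDiag, q.2 - q.1 ∈ diffs A := fun q hq => mem_image_of_mem _ hq
  obtain ⟨δ, hδ, hfiber⟩ := exists_lt_card_fiber_of_mul_lt_card_of_maps_to hmaps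
    (n := 2) (by rw [offDiag_card, hA]; omega)
  refine ⟨δ, hδ, hfiber.trans_le (card_le_card_of_injOn Prod.fst ?_ ?_)⟩
  · intro q hq
    simp only [coe_filter, mem_offDiag] at hq
    obtain ⟨⟨h1, h2, -⟩, rfl⟩ := hq
    simpa [h1] using h2
  · intro q hq q' hq' h
    have e := (mem_filter.1 hq).2
    have e' := (mem_filter.1 hq').2
    exact Prod.ext h (by linear_combination e - e' + h)

lemma twelve_le_sum_diffWeight_of_two_mul_eq {u : ZMod L} (hd : δ ∈ diffs A) (hu : u ∈ diffs A)
    (h2 : 2 * δ = 0) (h2u : 2 * u = δ) (huδ : u ≠ δ) : 12 ≤ ∑ δ ∈ diffs A, diffWeight δ := by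
  have hδ := ne_zero_of_mem_diffs hd
  have d12 : u ≠ -u := fun h => hδ (by linear_combination h - h2u)
  have d23 : -u ≠ δ := fun h => huδ (by linear_combination -h - h2)
  have := sum_map_diffWeight_le (l := [u, -u, δ])
    (by
      simp only [List.nodup_cons, List.mem_cons, List.not_mem_nil, List.nodup_nil, not_or,
        or_false, not_false_eq_true, and_true]
      exact ⟨⟨d12, huδ⟩, d23⟩)
    ⟨hu, neg_mem_diffs hu, hd⟩
  have := four_le_diffWeight_of_four_mul_eq_zero (δ := u) (by linear_combination 2 * h2u + h2)
  have := four_le_diffWeight_of_four_mul_eq_zero (δ := -u) (by linear_combination -2 * h2u - h2)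
  have := four_le_diffWeight_of_four_mul_eq_zero (δ := δ) (by linear_combination 2 * h2)
  simp only [List.map_cons, List.map_nil, List.sum_cons, List.sum_nil] at *
  omega

lemma twelve_le_sum_diffWeight_of_two_mul_ne {u : ZMod L} (hd : δ ∈ diffs A)
    (hu : u ∈ diffs A) (hv : u + δ ∈ diffs A) (h2 : 2 * δ = 0) (huδ : u ≠ δ)
    (h2u : 2 * u ≠ δ) : 12 ≤ ∑ δ ∈ diffs A, diffWeight δ := by
  have hδ := ne_zero_of_mem_diffs hd
  have hu0 := ne_zero_of_mem_diffs hu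
  have h2u' : 2 * u ≠ 0 := fun h => huδ (eq_of_two_mul_eq_zero h h2 hu0 hδ)
  have d13 : δ ≠ -u := fun h => huδ (by linear_combination h - h2)
  have d14 : δ ≠ u + δ := fun h => hu0 (by linear_combination -h)
  have d15 : δ ≠ -(u + δ) := fun h => hu0 (by linear_combination h - h2)
  have d23 : u ≠ -u := fun h => h2u' (by linear_combination h)
  have d24 : u ≠ u + δ := fun h => hδ (by linear_combination -h)
  have d25 : u ≠ -(u + δ) := fun h => h2u (by linear_combination h - h2)
  have d34 : -u ≠ u + δ := fun h => h2u (by linear_combination -h - h2)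
  have d35 : -u ≠ -(u + δ) := fun h => hδ (by linear_combination h)
  have d45 : u + δ ≠ -(u + δ) := fun h => h2u' (by linear_combination h - h2)
  have := sum_map_diffWeight_le (l := [δ, u, -u, u + δ, -(u + δ)])
    (by
      simp only [List.nodup_cons, List.mem_cons, List.not_mem_nil, List.nodup_nil, not_or,
        or_false, not_false_eq_true, and_true]
      exact ⟨⟨huδ.symm, d13, d14, d15⟩, ⟨d23, d24, d25⟩, ⟨d34, d35⟩, d45⟩)
    ⟨hd, hu, neg_mem_diffs hu, hv, neg_mem_diffs hv⟩
  have := four_le_diffWeight_of_four_mul_eq_zero (δ := δ) (by linear_combination 2 * h2)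
  have := two_le_diffWeight u
  have := two_le_diffWeight (-u)
  have := two_le_diffWeight (u + δ)
  have := two_le_diffWeight (-(u + δ))
  simp only [List.map_cons, List.map_nil, List.sum_cons, List.sum_nil] at *
  omega

lemma twelve_le_sum_diffWeight_of_two_mul_eq_zero (hδ : δ ≠ 0) (h2 : 2 * δ = 0)
    (hm : 3 ≤ #{x ∈ A | x + δ ∈ A}) : 12 ≤ ∑ δ ∈ diffs A, diffWeight δ := by
  obtain ⟨x, y, hx, hxδ, hy, hyδ, hyx, hyxδ⟩ : ∃ x y, x ∈ A ∧ x + δ ∈ A ∧ y ∈ A ∧ y + δ ∈ A ∧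
      y ≠ x ∧ y ≠ x + δ := by
    obtain ⟨x, hx, y, hy, z, hz, hxy, hxz, hyz⟩ := two_lt_card.1 hm
    simp only [mem_filter] at hx hy hz
    by_cases hyx : y = x + δ
    · exact ⟨x, z, hx.1, hx.2, hz.1, hz.2, Ne.symm hxz, hyx ▸ Ne.symm hyz⟩
    · exact ⟨x, y, hx.1, hx.2, hy.1, hy.2, Ne.symm hxy, hyx⟩
  have hd := mem_diffs_of_add_mem hx hxδ hδ
  have hu := sub_mem_diffs hx hy hyx.symm
  have huδ : y - x ≠ δ := fun h => hyxδ (by linear_combination h)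
  by_cases h2u : 2 * (y - x) = δ
  · exact twelve_le_sum_diffWeight_of_two_mul_eq hd hu h2 h2u huδ
  · have hv : y - x + δ ∈ diffs A := by
      simpa [sub_add_eq_add_sub] using
        sub_mem_diffs hx hyδ fun h => hyxδ (by linear_combination -h - h2)
    exact twelve_le_sum_diffWeight_of_two_mul_ne hd hu hv h2 huδ h2u

lemma twelve_le_sum_diffWeight_of_three_mul_eq_zero {t : ZMod L} (hδ : δ ≠ 0) (h3 : 3 * δ = 0)
    (hx : x ∈ A) (hx1 : x + δ ∈ A) (hx2 : x + 2 * δ ∈ A) (ht : t ∈ A) (ht0 : t ≠ x)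
    (ht1 : t ≠ x + δ) (ht2 : t ≠ x + 2 * δ) : 12 ≤ ∑ δ ∈ diffs A, diffWeight δ := by
  have h2 : 2 * δ ≠ 0 := fun h => hδ (by linear_combination h3 - h)
  have d12 : δ ≠ 2 * δ := fun h => hδ (by linear_combination -h)
  have d13 : δ ≠ t - x := fun h => ht1 (by linear_combination -h)
  have d14 : δ ≠ t - (x + δ) := fun h => ht2 (by linear_combination -h)
  have d15 : δ ≠ t - (x + 2 * δ) := fun h => ht0 (by linear_combination -h + h3)
  have d23 : 2 * δ ≠ t - x := fun h => ht2 (by linear_combination -h)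
  have d24 : 2 * δ ≠ t - (x + δ) := fun h => ht0 (by linear_combination -h + h3)
  have d25 : 2 * δ ≠ t - (x + 2 * δ) := fun h => ht1 (by linear_combination -h + h3)
  have d34 : t - x ≠ t - (x + δ) := fun h => hδ (by linear_combination h)
  have d35 : t - x ≠ t - (x + 2 * δ) := fun h => h2 (by linear_combination h)
  have d45 : t - (x + δ) ≠ t - (x + 2 * δ) := fun h => hδ (by linear_combination h)
  have := sum_map_diffWeight_le (l := [δ, 2 * δ, t - x, t - (x + δ), t - (x + 2 * δ)])
    (by
      simp only [List.nodup_cons, List.mem_cons, List.not_mem_nil, List.nodup_nil, not_or,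
        or_false, not_false_eq_true, and_true]
      exact ⟨⟨d12, d13, d14, d15⟩, ⟨d23, d24, d25⟩, ⟨d34, d35⟩, d45⟩)
    ⟨mem_diffs_of_add_mem hx hx1 hδ, mem_diffs_of_add_mem hx hx2 h2,
      sub_mem_diffs hx ht ht0.symm, sub_mem_diffs hx1 ht ht1.symm, sub_mem_diffs hx2 ht ht2.symm⟩
  have := four_le_diffWeight_of_three_mul_eq_zero h3
  have := four_le_diffWeight_of_three_mul_eq_zero (δ := 2 * δ) (by linear_combination 2 * h3)
  have := two_le_diffWeight (t - x)
  have := two_le_diffWeight (t - (x + δ))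
  have := two_le_diffWeight (t - (x + 2 * δ))
  simp only [List.map_cons, List.map_nil, List.sum_cons, List.sum_nil] at *
  omega

lemma twelve_le_sum_diffWeight_of_four_mul_eq_zero (m1 : δ ∈ diffs A) (m2 : 2 * δ ∈ diffs A)
    (m3 : 3 * δ ∈ diffs A) (h4 : 4 * δ = 0) : 12 ≤ ∑ δ ∈ diffs A, diffWeight δ := by
  have h1 := ne_zero_of_mem_diffs m1
  have h2 := ne_zero_of_mem_diffs m2
  have := sum_map_diffWeight_le (l := [δ, 2 * δ, 3 * δ])
    (by
      simp only [List.nodup_cons, List.mem_cons, List.not_mem_nil, List.nodup_nil, not_or,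
        or_false, not_false_eq_true, and_true]
      exact ⟨⟨fun h => h1 (by linear_combination -h), fun h => h2 (by linear_combination -h)⟩,
        fun h => h1 (by linear_combination -h)⟩)
    ⟨m1, m2, m3⟩
  have := four_le_diffWeight_of_four_mul_eq_zero h4
  have := four_le_diffWeight_of_four_mul_eq_zero (δ := 2 * δ) (by linear_combination 2 * h4)
  have := four_le_diffWeight_of_four_mul_eq_zero (δ := 3 * δ) (by linear_combination 3 * h4)
  simp only [List.map_cons, List.map_nil, List.sum_cons, List.sum_nil] at *
  omega

lemma twelve_le_sum_diffWeight_of_five_mul_eq_zero (m1 : δ ∈ diffs A) (m2 : 2 * δ ∈ diffs A)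
    (h3 : 3 * δ ≠ 0) (h4 : 4 * δ ≠ 0) (h5 : 5 * δ = 0) : 12 ≤ ∑ δ ∈ diffs A, diffWeight δ := by
  have h1 := ne_zero_of_mem_diffs m1
  have h2 := ne_zero_of_mem_diffs m2
  have := sum_map_diffWeight_le (l := [δ, 2 * δ, -(2 * δ), -δ])
    (by
      simp only [List.nodup_cons, List.mem_cons, List.not_mem_nil, List.nodup_nil, not_or,
        or_false, not_false_eq_true, and_true]
      exact ⟨⟨fun h => h1 (by linear_combination -h), fun h => h3 (by linear_combination h),
        fun h => h2 (by linear_combination h)⟩, ⟨fun h => h4 (by linear_combination h),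
        fun h => h3 (by linear_combination h)⟩, fun h => h1 (by linear_combination -h)⟩)
    ⟨m1, m2, neg_mem_diffs m2, neg_mem_diffs m1⟩
  have := three_le_diffWeight_of_five_mul_eq_zero h5
  have := three_le_diffWeight_of_five_mul_eq_zero (δ := 2 * δ) (by linear_combination 2 * h5)
  have := three_le_diffWeight_of_five_mul_eq_zero (δ := -(2 * δ)) (by linear_combination -2 * h5)
  have := three_le_diffWeight_of_five_mul_eq_zero (δ := -δ) (by linear_combination -h5)
  simp only [List.map_cons, List.map_nil, List.sum_cons, List.sum_nil] at *
  omega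

lemma twelve_le_sum_diffWeight_of_six_mul_eq_zero (m2 : 2 * δ ∈ diffs A) (m3 : 3 * δ ∈ diffs A)
    (h1 : δ ≠ 0) (h4 : 4 * δ ≠ 0) (h5 : 5 * δ ≠ 0) (h6 : 6 * δ = 0) :
    12 ≤ ∑ δ ∈ diffs A, diffWeight δ := by
  have := sum_map_diffWeight_le (l := [2 * δ, 3 * δ, -(2 * δ)])
    (by
      simp only [List.nodup_cons, List.mem_cons, List.not_mem_nil, List.nodup_nil, not_or,
        or_false, not_false_eq_true, and_true]
      exact ⟨⟨fun h => h1 (by linear_combination -h), fun h => h4 (by linear_combination h)⟩,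
        fun h => h5 (by linear_combination h)⟩)
    ⟨m2, m3, neg_mem_diffs m2⟩
  have := four_le_diffWeight_of_three_mul_eq_zero (δ := 2 * δ) (by linear_combination h6)
  have := four_le_diffWeight_of_four_mul_eq_zero (δ := 3 * δ) (by linear_combination 2 * h6)
  have := four_le_diffWeight_of_three_mul_eq_zero (δ := -(2 * δ)) (by linear_combination -h6)
  simp only [List.map_cons, List.map_nil, List.sum_cons, List.sum_nil] at *
  omega

lemma twelve_le_sum_diffWeight_of_six_mul_ne_zero (m1 : δ ∈ diffs A) (m2 : 2 * δ ∈ diffs A)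
    (m3 : 3 * δ ∈ diffs A) (h4 : 4 * δ ≠ 0) (h5 : 5 * δ ≠ 0) (h6 : 6 * δ ≠ 0) :
    12 ≤ ∑ δ ∈ diffs A, diffWeight δ := by
  have h1 := ne_zero_of_mem_diffs m1
  have h2 := ne_zero_of_mem_diffs m2
  have h3 := ne_zero_of_mem_diffs m3
  have d12 : δ ≠ 2 * δ := fun h => h1 (by linear_combination -h)
  have d13 : δ ≠ 3 * δ := fun h => h2 (by linear_combination -h)
  have d14 : δ ≠ -δ := fun h => h2 (by linear_combination h)
  have d15 : δ ≠ -(2 * δ) := fun h => h3 (by linear_combination h)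
  have d16 : δ ≠ -(3 * δ) := fun h => h4 (by linear_combination h)
  have d23 : 2 * δ ≠ 3 * δ := fun h => h1 (by linear_combination -h)
  have d24 : 2 * δ ≠ -δ := fun h => h3 (by linear_combination h)
  have d25 : 2 * δ ≠ -(2 * δ) := fun h => h4 (by linear_combination h)
  have d26 : 2 * δ ≠ -(3 * δ) := fun h => h5 (by linear_combination h)
  have d34 : 3 * δ ≠ -δ := fun h => h4 (by linear_combination h)
  have d35 : 3 * δ ≠ -(2 * δ) := fun h => h5 (by linear_combination h)
  have d36 : 3 * δ ≠ -(3 * δ) := fun h => h6 (by linear_combination h)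
  have d45 : -δ ≠ -(2 * δ) := fun h => h1 (by linear_combination h)
  have d46 : -δ ≠ -(3 * δ) := fun h => h2 (by linear_combination h)
  have d56 : -(2 * δ) ≠ -(3 * δ) := fun h => h1 (by linear_combination h)
  have := sum_map_diffWeight_le (l := [δ, 2 * δ, 3 * δ, -δ, -(2 * δ), -(3 * δ)])
    (by
      simp only [List.nodup_cons, List.mem_cons, List.not_mem_nil, List.nodup_nil, not_or,
        or_false, not_false_eq_true, and_true]
      exact ⟨⟨d12, d13, d14, d15, d16⟩, ⟨d23, d24, d25, d26⟩, ⟨d34, d35, d36⟩, ⟨d45, d46⟩, d56⟩)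
    ⟨m1, m2, m3, neg_mem_diffs m1, neg_mem_diffs m2, neg_mem_diffs m3⟩
  have := two_le_diffWeight δ
  have := two_le_diffWeight (2 * δ)
  have := two_le_diffWeight (3 * δ)
  have := two_le_diffWeight (-δ)
  have := two_le_diffWeight (-(2 * δ))
  have := two_le_diffWeight (-(3 * δ))
  simp only [List.map_cons, List.map_nil, List.sum_cons, List.sum_nil] at *
  omega

lemma twelve_le_sum_diffWeight_of_add_mul_mem (hx0 : x ∈ A) (hx1 : x + δ ∈ A)
    (hx2 : x + 2 * δ ∈ A) (hx3 : x + 3 * δ ∈ A) (h1 : δ ≠ 0) (h2 : 2 * δ ≠ 0) (h3 : 3 * δ ≠ 0) :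
    12 ≤ ∑ δ ∈ diffs A, diffWeight δ := by
  have m1 := mem_diffs_of_add_mem hx0 hx1 h1
  have m2 := mem_diffs_of_add_mem hx0 hx2 h2
  have m3 := mem_diffs_of_add_mem hx0 hx3 h3
  by_cases h4 : 4 * δ = 0
  · exact twelve_le_sum_diffWeight_of_four_mul_eq_zero m1 m2 m3 h4
  by_cases h5 : 5 * δ = 0
  · exact twelve_le_sum_diffWeight_of_five_mul_eq_zero m1 m2 h3 h4 h5
  by_cases h6 : 6 * δ = 0
  · exact twelve_le_sum_diffWeight_of_six_mul_eq_zero m2 m3 h1 h4 h5 h6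
  exact twelve_le_sum_diffWeight_of_six_mul_ne_zero m1 m2 m3 h4 h5 h6

lemma exists_add_mem_add_two_mul_mem (hA : #A = 4) (hm : 3 ≤ #{x ∈ A | x + δ ∈ A}) :
    ∃ x ∈ A, x + δ ∈ A ∧ x + 2 * δ ∈ A := by
  set B := {x ∈ A | x + δ ∈ A}
  have hB : B ⊆ A := filter_subset _ _
  have hBδ : B.image (· + δ) ⊆ A := by
    intro y hy
    obtain ⟨x, hx, rfl⟩ := mem_image.1 hy
    exact (mem_filter.1 hx).2
  have hcard : #(B.image (· + δ)) = #B := card_image_of_injective _ (add_left_injective δ)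
  have hunion := card_le_card (union_subset hB hBδ)
  have hinter := card_union_add_card_inter B (B.image (· + δ))
  obtain ⟨y, hy⟩ := card_pos.1 (by omega : 0 < #(B ∩ B.image (· + δ)))
  obtain ⟨hyB, hyδ⟩ := mem_inter.1 hy
  obtain ⟨x, hx, rfl⟩ := mem_image.1 hyδ
  obtain ⟨hxA, hx1⟩ := mem_filter.1 hx
  exact ⟨x, hxA, hx1, by simpa [two_mul, add_assoc] using (mem_filter.1 hyB).2⟩

lemma exists_add_three_mul_mem (hA : #A = 4) (hδ : δ ≠ 0) (h2 : 2 * δ ≠ 0)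
    (hm : 3 ≤ #{x ∈ A | x + δ ∈ A}) :
    ∃ z ∈ A, z + δ ∈ A ∧ z + 2 * δ ∈ A ∧ z + 3 * δ ∈ A := by
  obtain ⟨x, hx, hx1, hx2⟩ := exists_add_mem_add_two_mul_mem hA hm
  obtain ⟨w, hw, hwx⟩ := exists_mem_notMem_of_card_lt_card (s := {x, x + δ})
    (card_le_two.trans_lt (by omega : 2 < #{x ∈ A | x + δ ∈ A}))
  obtain ⟨hwA, hw1⟩ := mem_filter.1 hw
  simp only [mem_insert, mem_singleton, not_or] at hwx
  by_cases hw2 : w = x + 2 * δ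
  · refine ⟨x, hx, hx1, hx2, ?_⟩
    convert hw1 using 1
    rw [hw2]; ring
  have hA' : A = {x, x + δ, x + 2 * δ, w} := by
    refine (eq_of_subset_of_card_le (by simp [insert_subset_iff, *]) ?_).symm
    rw [hA, card_insert_of_notMem, card_insert_of_notMem, card_pair (Ne.symm hw2)]
    · simp only [mem_insert, mem_singleton, not_or]
      exact ⟨fun h => hδ (by linear_combination -h), Ne.symm hwx.2⟩
    · simp only [mem_insert, mem_singleton, not_or]
      exact ⟨fun h => hδ (by linear_combination -h), fun h => h2 (by linear_combination -h),
        Ne.symm hwx.1⟩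
  rw [hA'] at hw1
  simp only [mem_insert, mem_singleton] at hw1
  rcases hw1 with h | h | h | h
  · refine ⟨w, hwA, h ▸ hx, ?_, ?_⟩
    · convert hx1 using 1; linear_combination h
    · convert hx2 using 1; linear_combination h
  · exact absurd (by linear_combination h) hwx.1
  · exact absurd (by linear_combination h) hwx.2
  · exact absurd (by linear_combination h) hδ

lemma twelve_le_sum_diffWeight_of_two_mul_ne_zero (hA : #A = 4) (hδ : δ ≠ 0) (h2 : 2 * δ ≠ 0)
    (hm : 3 ≤ #{x ∈ A | x + δ ∈ A}) : 12 ≤ ∑ δ ∈ diffs A, diffWeight δ := by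
  by_cases h3 : 3 * δ = 0
  · obtain ⟨x, hx, hx1, hx2⟩ := exists_add_mem_add_two_mul_mem hA hm
    obtain ⟨t, ht, htx⟩ := exists_mem_notMem_of_card_lt_card (s := {x, x + δ, x + 2 * δ})
      (card_le_three.trans_lt (hA ▸ by omega : 3 < #A))
    simp only [mem_insert, mem_singleton, not_or] at htx
    exact twelve_le_sum_diffWeight_of_three_mul_eq_zero hδ h3 hx hx1 hx2 ht htx.1 htx.2.1 htx.2.2
  · obtain ⟨z, hz0, hz1, hz2, hz3⟩ := exists_add_three_mul_mem hA hδ h2 hm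
    exact twelve_le_sum_diffWeight_of_add_mul_mem hz0 hz1 hz2 hz3 hδ h2 h3

lemma twelve_le_sum_diffWeight_of_card_eq_four (hA : #A = 4) :
    12 ≤ ∑ δ ∈ diffs A, diffWeight δ := by
  by_cases hD : 6 ≤ #(diffs A)
  · calc 12 ≤ #(diffs A) * 2 := by omega
      _ ≤ ∑ δ ∈ diffs A, diffWeight δ := card_nsmul_le_sum _ _ _ fun δ _ => two_le_diffWeight δ
  obtain ⟨δ, hδD, hm⟩ := exists_three_le_card_filter_add_mem hA (by omega)
  have hδ := ne_zero_of_mem_diffs hδD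
  by_cases h2 : 2 * δ = 0
  · exact twelve_le_sum_diffWeight_of_two_mul_eq_zero hδ h2 hm
  · exact twelve_le_sum_diffWeight_of_two_mul_ne_zero hA hδ h2 hm

end Differences

section Torsion

variable {L : ℕ} [NeZero L]

lemma card_filter_natCast_mul_eq_zero (k : ℕ) :
    #{δ : ZMod L | (k : ZMod L) * δ = 0} = L.gcd k := by
  have hker := IsAddCyclic.card_nsmulAddMonoidHom_ker (ZMod L) k
  rw [Nat.card_zmod, Nat.card_eq_fintype_card, Fintype.card_subtype] at hker
  simpa [nsmul_eq_mul] using hker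

lemma sum_diffWeight_univ :
    ∑ δ : ZMod L, diffWeight δ = 2 * L + (2 * L.gcd 3 + 2 * L.gcd 4 + L.gcd 5) := by
  have hk (k : ℕ) : ∑ δ : ZMod L, (if (k : ZMod L) * δ = 0 then 1 else 0) = L.gcd k := by
    rw [sum_boole, card_filter_natCast_mul_eq_zero, Nat.cast_id]
  have h3 := hk 3
  have h4 := hk 4
  have h5 := hk 5
  push_cast at h3 h4 h5
  simp only [diffWeight, sum_add_distrib, ← mul_sum, sum_const, card_univ, ZMod.card,
    smul_eq_mul, h3, h4, h5]
  ring

end Torsion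

lemma two_mul_gcd_three_add_two_mul_gcd_four_add_gcd_five (L : ℕ) :
    2 * L.gcd 3 + 2 * L.gcd 4 + L.gcd 5 =
      5 + 2 * ((if 2 ∣ L then 1 else 0) + 2 * (if 3 ∣ L then 1 else 0)
        + 2 * (if 4 ∣ L then 1 else 0) + 2 * (if 5 ∣ L then 1 else 0)) := by
  have hgcd (k : ℕ) : L.gcd k = (L % k).gcd k := by rw [Nat.gcd_comm, Nat.gcd_rec]
  have h2 : 2 ∣ L ↔ 2 ∣ L % 4 := (Nat.dvd_mod_iff (by norm_num)).symm
  simp only [hgcd 3, hgcd 4, hgcd 5, h2, Nat.dvd_iff_mod_eq_zero (n := L)]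
  have := Nat.mod_lt L (show 0 < 3 by norm_num)
  have := Nat.mod_lt L (show 0 < 4 by norm_num)
  have := Nat.mod_lt L (show 0 < 5 by norm_num)
  interval_cases L % 3 <;> interval_cases L % 4 <;> interval_cases L % 5 <;> decide

section Pattern

variable {ι : Type*} [DecidableEq ι] {L : ℕ} {S : Finset (ι × ZMod L)}

def pattern (S : Finset (ι × ZMod L)) : Finset (ι × ι × ZMod L) :=
  S.offDiag.image fun q => (q.1.1, q.2.1, q.2.2 - q.1.2)

def patternWeight (p : ι × ι × ZMod L) : ℕ :=
  if p.1 = p.2.1 then diffWeight p.2.2 else 1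

def channel (S : Finset (ι × ZMod L)) (i : ι) : Finset (ZMod L) :=
  {x ∈ S | x.1 = i}.image Prod.snd

lemma mk_mem_pattern {x y : ι × ZMod L} (hx : x ∈ S) (hy : y ∈ S) (hxy : x ≠ y) :
    (x.1, y.1, y.2 - x.2) ∈ pattern S :=
  mem_image.2 ⟨(x, y), mem_offDiag.2 ⟨hx, hy, hxy⟩, rfl⟩

lemma mk_self_zero_notMem_pattern (i : ι) : (i, i, (0 : ZMod L)) ∉ pattern S := by
  intro h
  obtain ⟨q, hq, he⟩ := mem_image.1 h
  simp only [Prod.mk.injEq] at he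
  exact (mem_offDiag.1 hq).2.2
    (Prod.ext (he.1.trans he.2.1.symm) (by linear_combination -he.2.2))

lemma disjoint_pattern {T : Finset (ι × ZMod L)}
    (hST : ∀ τ : ZMod L, #{p ∈ S | (p.1, p.2 + τ) ∈ T} ≤ 1) :
    Disjoint (pattern S) (pattern T) := by
  refine disjoint_left.2 fun p hpS hpT => ?_
  obtain ⟨⟨x, y⟩, hq, rfl⟩ := mem_image.1 hpS
  obtain ⟨⟨x', y'⟩, hq', he⟩ := mem_image.1 hpT
  obtain ⟨hx, hy, hxy⟩ := mem_offDiag.1 hq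
  obtain ⟨hx', hy', -⟩ := mem_offDiag.1 hq'
  simp only [Prod.mk.injEq] at he
  obtain ⟨h1, h2, h3⟩ := he
  have hshift : (x.1, x.2 + (x'.2 - x.2)) = x' ∧ (y.1, y.2 + (x'.2 - x.2)) = y' :=
    ⟨Prod.ext h1.symm (by ring), Prod.ext h2.symm (by linear_combination -h3)⟩
  have := hST (x'.2 - x.2)
  rw [← not_lt, one_lt_card] at this
  exact this
    ⟨x, mem_filter.2 ⟨hx, by rwa [hshift.1]⟩, y, mem_filter.2 ⟨hy, by rwa [hshift.2]⟩, hxy⟩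

lemma card_channel (i : ι) : #(channel S i) = #{x ∈ S | x.1 = i} :=
  card_image_of_injOn fun _ hx _ hy h =>
    Prod.ext ((mem_filter.1 hx).2.trans (mem_filter.1 hy).2.symm) h

lemma sum_diffWeight_channel_le (i : ι) :
    ∑ δ ∈ diffs (channel S i), diffWeight δ ≤
      ∑ p ∈ pattern S with p.1 = i ∧ p.2.1 = i, patternWeight p := by
  calc ∑ δ ∈ diffs (channel S i), diffWeight δ
      = ∑ p ∈ (diffs (channel S i)).image (fun δ => (i, i, δ)), patternWeight p := by
        rw [sum_image fun _ _ _ _ h => by simpa using h]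
        simp [patternWeight]
    _ ≤ _ := sum_le_sum_of_subset fun p hp => ?_
  obtain ⟨δ, hδ, rfl⟩ := mem_image.1 hp
  obtain ⟨⟨a, b⟩, hab, rfl⟩ := mem_image.1 hδ
  obtain ⟨ha, hb, hne⟩ := mem_offDiag.1 hab
  obtain ⟨x, hx, rfl⟩ := mem_image.1 ha
  obtain ⟨y, hy, rfl⟩ := mem_image.1 hb
  obtain ⟨hxS, hxi⟩ := mem_filter.1 hx
  obtain ⟨hyS, hyi⟩ := mem_filter.1 hy
  have := mk_mem_pattern hxS hyS fun h => hne (h ▸ rfl)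
  rw [hxi, hyi] at this
  exact mem_filter.2 ⟨this, rfl, rfl⟩

lemma card_filter_fst_ne_le {x : ι × ZMod L} {i : ι} (hx : x ∈ S) (hxi : x.1 = i) :
    #{y ∈ S | y.1 ≠ i} ≤ #{p ∈ pattern S | p.1 = i ∧ p.2.1 ≠ i} := by
  refine card_le_card_of_injOn (fun y => (i, y.1, y.2 - x.2)) (fun y hy => ?_)
    fun y _ z _ h => ?_
  · obtain ⟨hyS, hyi⟩ := mem_filter.1 hy
    have := mk_mem_pattern hx hyS fun h => hyi (h ▸ hxi)
    rw [hxi] at this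
    exact mem_filter.2 ⟨this, rfl, hyi⟩
  · simp only [Prod.mk.injEq, sub_left_inj, true_and] at h
    exact Prod.ext h.1 h.2

lemma card_filter_fst_eq_le {y : ι × ZMod L} {i : ι} (hy : y ∈ S) (hyi : y.1 ≠ i) :
    #{x ∈ S | x.1 = i} ≤ #{p ∈ pattern S | p.1 = i ∧ p.2.1 ≠ i} := by
  refine card_le_card_of_injOn (fun x => (i, y.1, y.2 - x.2)) (fun x hx => ?_)
    fun x hx z hz h => ?_
  · obtain ⟨hxS, hxi⟩ := mem_filter.1 hx
    have := mk_mem_pattern hxS hy fun h => hyi (h ▸ hxi)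
    rw [hxi] at this
    exact mem_filter.2 ⟨this, rfl, hyi⟩
  · simp only [Prod.mk.injEq, sub_right_inj, true_and] at h
    exact Prod.ext ((mem_filter.1 hx).2.trans (mem_filter.1 hz).2.symm) h

lemma sum_patternWeight_filter_fst (i : ι) :
    ∑ p ∈ pattern S with p.1 = i, patternWeight p =
      ∑ p ∈ pattern S with p.1 = i ∧ p.2.1 = i, patternWeight p +
        #{p ∈ pattern S | p.1 = i ∧ p.2.1 ≠ i} := by
  rw [← sum_filter_add_sum_filter_not _ (fun p => p.2.1 = i), filter_filter, filter_filter,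
    card_eq_sum_ones]
  refine congrArg _ (sum_congr rfl fun p hp => ?_)
  obtain ⟨-, h1, h2⟩ := mem_filter.1 hp
  exact if_neg (h1 ▸ Ne.symm h2)

lemma three_mul_card_filter_fst_le (hS : #S = 4) (i : ι) :
    3 * #{x ∈ S | x.1 = i} ≤ ∑ p ∈ pattern S with p.1 = i, patternWeight p := by
  rw [sum_patternWeight_filter_fst]
  have hdiag := sum_diffWeight_channel_le (S := S) i
  have hsplit : #{x ∈ S | x.1 = i} + #{y ∈ S | y.1 ≠ i} = 4 :=
    hS ▸ card_filter_add_card_filter_not _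
  rw [← card_channel] at hsplit ⊢
  rcases (channel S i).eq_empty_or_nonempty with h0 | ⟨a, ha⟩
  · rw [h0, card_empty]; omega
  obtain ⟨x, hx, -⟩ := mem_image.1 ha
  obtain ⟨hxS, hxi⟩ := mem_filter.1 hx
  by_cases hcross : ∃ y ∈ S, y.1 ≠ i
  · obtain ⟨y, hyS, hyi⟩ := hcross
    have hout := card_filter_fst_ne_le hxS hxi
    have hin := card_filter_fst_eq_le hyS hyi
    rw [← card_channel] at hin
    have hm : 0 < #{y ∈ S | y.1 ≠ i} := card_pos.2 ⟨y, mem_filter.2 ⟨hyS, hyi⟩⟩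
    rcases (by omega : #(channel S i) ≤ 1 ∨ #(channel S i) = 2 ∨ #(channel S i) = 3)
      with h | h | h
    · omega
    · have := four_le_sum_diffWeight_of_one_lt_card (A := channel S i) (by omega)
      omega
    · have := six_le_sum_diffWeight_of_two_lt_card (A := channel S i) (by omega)
      omega
  · simp only [not_exists, not_and, not_not] at hcross
    have h0 : #{y ∈ S | y.1 ≠ i} = 0 :=
      card_eq_zero.2 (filter_eq_empty_iff.2 fun y hy => not_not.2 (hcross y hy))
    have := twelve_le_sum_diffWeight_of_card_eq_four (A := channel S i) (by omega)
    omega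

lemma twelve_le_sum_patternWeight [Fintype ι] (hS : #S = 4) :
    12 ≤ ∑ p ∈ pattern S, patternWeight p :=
  calc 12 = 3 * #S := by rw [hS]
    _ = ∑ i, 3 * #{x ∈ S | x.1 = i} := by
        rw [← mul_sum, ← card_eq_sum_card_fiberwise fun x _ => mem_univ x.1]
    _ ≤ ∑ i, ∑ p ∈ pattern S with p.1 = i, patternWeight p :=
        sum_le_sum fun i _ => three_mul_card_filter_fst_le hS i
    _ = ∑ p ∈ pattern S, patternWeight p := sum_fiberwise _ _ _

lemma sum_patternWeight_univ [Fintype ι] [NeZero L] :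
    ∑ p : ι × ι × ZMod L, patternWeight p =
      Fintype.card ι * (∑ δ : ZMod L, diffWeight δ + (Fintype.card ι - 1) * L) := by
  have hrow (i : ι) : ∑ j : ι, ∑ δ : ZMod L, patternWeight (i, j, δ) =
      ∑ δ : ZMod L, diffWeight δ + (Fintype.card ι - 1) * L := by
    have hoff : ∀ j ∈ univ.erase i, ∑ δ : ZMod L, patternWeight (i, j, δ) = L :=
      fun j hj => by simp [patternWeight, (ne_of_mem_erase hj).symm]
    rw [← add_sum_erase _ _ (mem_univ i), sum_congr rfl hoff]
    simp [patternWeight, card_erase_of_mem]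
  simp only [Fintype.sum_prod_type, hrow, sum_const, card_univ, smul_eq_mul]

end Pattern

lemma twelve_mul_card_add_le {M L : ℕ} [NeZero L] {C : Finset (Finset (Fin M × ZMod L))}
    (hC : IsMCCAC M L 4 C) :
    12 * #C + 7 * M ≤ M * (∑ δ : ZMod L, diffWeight δ + (M - 1) * L) := by
  obtain ⟨hcard, hcorr⟩ := hC
  set Z : Finset (Fin M × Fin M × ZMod L) := univ.image fun i => (i, i, 0)
  have hZ : ∑ p ∈ Z, patternWeight p = 7 * M := by
    rw [sum_image fun _ _ _ _ h => by simpa using h]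
    simp [patternWeight, diffWeight, mul_comm]
  have hdisj : (C : Set (Finset (Fin M × ZMod L))).PairwiseDisjoint pattern :=
    fun S hS T hT hST => disjoint_pattern (hcorr S hS T hT hST)
  have hZdisj : Disjoint (C.biUnion pattern) Z := by
    refine disjoint_left.2 fun p hp hpZ => ?_
    obtain ⟨i, -, rfl⟩ := mem_image.1 hpZ
    obtain ⟨S, -, hS⟩ := mem_biUnion.1 hp
    exact mk_self_zero_notMem_pattern i hS
  calc 12 * #C + 7 * M = ∑ S ∈ C, 12 + ∑ p ∈ Z, patternWeight p := by
        rw [sum_const, smul_eq_mul, hZ, mul_comm]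
    _ ≤ ∑ S ∈ C, ∑ p ∈ pattern S, patternWeight p + ∑ p ∈ Z, patternWeight p := by
        gcongr with S hS
        exact twelve_le_sum_patternWeight (hcard S hS)
    _ = ∑ p ∈ C.biUnion pattern ∪ Z, patternWeight p := by
        rw [sum_union hZdisj, sum_biUnion hdisj]
    _ ≤ ∑ p, patternWeight p := sum_le_sum_of_subset (subset_univ _)
    _ = M * (∑ δ : ZMod L, diffWeight δ + (M - 1) * L) := by
        rw [sum_patternWeight_univ, Fintype.card_fin]

lemma mul_twelve_le_of_add_le {M L j c : ℕ} (hL : 2 ≤ L)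
    (h : 12 * c + 7 * M ≤ M * (2 * L + (5 + 2 * j) + (M - 1) * L)) :
    c * 12 ≤ M * (M * L + L - 2 + 2 * j) := by
  obtain ⟨l, rfl⟩ : ∃ l, L = l + 2 := ⟨L - 2, by omega⟩
  rcases M with _ | m
  · simpa using h
  rw [show (m + 1) * (l + 2) + (l + 2) - 2 = (m + 1) * (l + 2) + l by omega]
  simp only [Nat.add_sub_cancel] at h
  nlinarith

end MCCAC

theorem stmt14_general (M L : ℕ) (hL : 2 ≤ L)
    (C : Finset (Finset (Fin M × ZMod L))) (hC : IsMCCAC M L 4 C) :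
    C.card ≤ M * (M * L + L - 2 +
      2 * ((if 2 ∣ L then 1 else 0) + 2 * (if 3 ∣ L then 1 else 0)
        + 2 * (if 4 ∣ L then 1 else 0) + 2 * (if 5 ∣ L then 1 else 0))) / 12 := by
  have : NeZero L := ⟨by omega⟩
  have hcount := MCCAC.twelve_mul_card_add_le hC
  rw [MCCAC.sum_diffWeight_univ,
    MCCAC.two_mul_gcd_three_add_two_mul_gcd_four_add_gcd_five] at hcount
  rw [Nat.le_div_iff_mul_le (by norm_num)]
  exact MCCAC.mul_twelve_le_of_add_le hL hcount

theorem stmt14 (M L : ℕ) (hM : 4 ≤ M) (hL : 2 ≤ L)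
    (C : Finset (Finset (Fin M × ZMod L))) (hC : IsMCCAC M L 4 C) :
    C.card ≤ M * (M * L + L - 2 +
      2 * ((if 2 ∣ L then 1 else 0) + 2 * (if 3 ∣ L then 1 else 0)
        + 2 * (if 4 ∣ L then 1 else 0) + 2 * (if 5 ∣ L then 1 else 0))) / 12 :=
  stmt14_general M L hL C hC
end

section
/- There exists an MC-CAC(3, 5, 3) of size 8, and every MC-CAC(3, 5, 3) has size at most 8; hence A(3, 5, 3) = 8. -/
/-!
To a codeword `S` attach its ordered differences `(x.1, y.1, y.2 - x.2)`, `x ≠ y ∈ S`. If two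
codewords share a difference, a suitable shift carries two points of one into the other, so the
difference sets of a code are pairwise disjoint subsets of `Fin 3 × Fin 3 × ZMod 5`, a set of
`45` elements. A weight-3 codeword met by at least two channels has `6` distinct differences
(`2` is invertible mod `5`); one inside a single channel `i` has only the `4` differences
`(i, i, d)`, `d ≠ 0`, and since each of these contains `(i, i, 1)` there is at most one per
channel. Hence `6 |C| ≤ 45 + 2 * 3`, i.e. `|C| ≤ 8`, and the eight given patterns attain this.
-/

open Finset

theorem Finset.eq_of_card_le_three {α : Type*} [DecidableEq α] {S : Finset α} (hS : #S ≤ 3)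
    {a b c : α} (ha : a ∈ S) (hb : b ∈ S) (hc : c ∈ S) (hab : a ≠ b) (hac : a ≠ c)
    (hbc : b ≠ c) : S = {a, b, c} :=
  (eq_of_subset_of_card_le (by simp [insert_subset_iff, *])
    (hS.trans (card_eq_three.2 ⟨a, b, c, hab, hac, hbc, rfl⟩).ge)).symm

/-- `s` and its translate `s + d` are too large to be disjoint. -/
theorem ZMod.exists_sub_eq_of_lt_two_mul_card {L : ℕ} [NeZero L] {s : Finset (ZMod L)}
    (hs : L < 2 * #s) (d : ZMod L) : ∃ a ∈ s, ∃ b ∈ s, b - a = d := by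
  obtain ⟨b, hb⟩ := inter_nonempty_of_card_lt_card_add_card (subset_univ s)
    (subset_univ (s.image (· + d))) (by
      rw [card_univ, ZMod.card, card_image_of_injective _ (add_left_injective d)]; omega)
  obtain ⟨hbs, hbd⟩ := mem_inter.1 hb
  obtain ⟨a, ha, rfl⟩ := mem_image.1 hbd
  exact ⟨a, ha, a + d, hbs, add_sub_cancel_left a d⟩

namespace MCCAC

variable {M L : ℕ}

def pairDiff (x y : Fin M × ZMod L) : Fin M × Fin M × ZMod L := (x.1, y.1, y.2 - x.2)

def diffSet (S : Finset (Fin M × ZMod L)) : Finset (Fin M × Fin M × ZMod L) :=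
  S.offDiag.image fun xy => pairDiff xy.1 xy.2

def OnChannel (i : Fin M) (S : Finset (Fin M × ZMod L)) : Prop := ∀ p ∈ S, p.1 = i

instance (i : Fin M) : DecidablePred (OnChannel (L := L) i) :=
  fun S => inferInstanceAs (Decidable (∀ p ∈ S, p.1 = i))

theorem mem_diffSet {S : Finset (Fin M × ZMod L)} {t : Fin M × Fin M × ZMod L} :
    t ∈ diffSet S ↔ ∃ x ∈ S, ∃ y ∈ S, x ≠ y ∧ pairDiff x y = t := by
  simp [diffSet, mem_offDiag, and_assoc]

theorem pairDiff_mem_diffSet {S : Finset (Fin M × ZMod L)} {x y : Fin M × ZMod L}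
    (hx : x ∈ S) (hy : y ∈ S) (hxy : x ≠ y) : pairDiff x y ∈ diffSet S :=
  mem_diffSet.2 ⟨x, hx, y, hy, hxy, rfl⟩

/-- A common difference `pairDiff x y = pairDiff u v` is realized by the shift `τ = u.2 - x.2`,
which carries both `x` and `y` into `T`. -/
theorem _root_.IsMCCAC.disjoint_diffSet {w : ℕ} {C : Finset (Finset (Fin M × ZMod L))}
    (hC : IsMCCAC M L w C) {S T : Finset (Fin M × ZMod L)} (hS : S ∈ C) (hT : T ∈ C)
    (hST : S ≠ T) : Disjoint (diffSet S) (diffSet T) := by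
  rw [disjoint_left]
  intro t htS htT
  obtain ⟨x, hx, y, hy, hxy, rfl⟩ := mem_diffSet.1 htS
  obtain ⟨u, hu, v, hv, -, huv⟩ := mem_diffSet.1 htT
  simp only [pairDiff, Prod.mk.injEq] at huv
  obtain ⟨hux, hvy, hd⟩ := huv
  have hxT : (x.1, x.2 + (u.2 - x.2)) ∈ T := by
    rwa [add_sub_cancel, ← hux]
  have hyT : (y.1, y.2 + (u.2 - x.2)) ∈ T := by
    rwa [show y.2 + (u.2 - x.2) = v.2 by linear_combination -hd, ← hvy]
  have := hC.2 S hS T hT hST (u.2 - x.2)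
  rw [card_le_one] at this
  exact hxy (this x (mem_filter.2 ⟨hx, hxT⟩) y (mem_filter.2 ⟨hy, hyT⟩))

theorem _root_.IsMCCAC.sum_card_diffSet_le [NeZero L] {w : ℕ}
    {C : Finset (Finset (Fin M × ZMod L))} (hC : IsMCCAC M L w C) :
    ∑ S ∈ C, #(diffSet S) ≤ M * (M * L) := by
  rw [← card_biUnion fun S hS T hT hST => hC.disjoint_diffSet hS hT hST]
  simpa using card_le_univ (C.biUnion diffSet)

/-- Two ordered pairs of a codeword with the same difference share an element; with only three
elements and `2` invertible this forces all three into one channel. -/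
theorem injOn_pairDiff_offDiag (hL : Odd L) {S : Finset (Fin M × ZMod L)} (hS : #S ≤ 3)
    (hch : ∀ i, ¬ OnChannel i S) :
    Set.InjOn (fun xy : (Fin M × ZMod L) × (Fin M × ZMod L) => pairDiff xy.1 xy.2)
      S.offDiag := by
  have no_three_in_one_channel : ∀ {a b c}, a ∈ S → b ∈ S → c ∈ S → a ≠ b → a ≠ c → b ≠ c →
      a.1 = b.1 → a.1 = c.1 → False := by
    intro a b c ha hb hc hab hac hbc hb1 hc1
    apply hch a.1
    rw [Finset.eq_of_card_le_three hS ha hb hc hab hac hbc]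
    simp [OnChannel, hb1.symm, hc1.symm]
  rintro ⟨x, y⟩ hxy ⟨x', y'⟩ hxy' h
  simp only [mem_coe, mem_offDiag] at hxy hxy'
  obtain ⟨hx, hy, hxy⟩ := hxy
  obtain ⟨hx', hy', hxy'⟩ := hxy'
  simp only [pairDiff, Prod.mk.injEq] at h ⊢
  obtain ⟨h1, h2, hd⟩ := h
  by_cases ex : x = x'
  · subst ex
    exact ⟨rfl, Prod.ext h2 (by simpa using hd)⟩
  by_cases ey : y = x'
  · subst ey
    by_cases e : y' = x
    · subst e
      refine absurd (Prod.ext h1 ?_) hxy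
      rw [← sub_eq_zero, ← ZMod.add_self_eq_zero_iff_eq_zero hL]
      linear_combination -hd
    · exact (no_three_in_one_channel hx hy hy' hxy (Ne.symm e) hxy' h1 (h1.trans h2)).elim
  · have hy'_mem := Finset.eq_of_card_le_three hS hx hy hx' hxy ex ey ▸ hy'
    simp only [mem_insert, mem_singleton] at hy'_mem
    rcases hy'_mem with rfl | rfl | rfl
    · exact (no_three_in_one_channel hx hy hx' hxy ex ey h2.symm h1).elim
    · exact absurd (Prod.ext h1 (by simpa using hd)) ex
    · exact absurd rfl hxy'

theorem card_diffSet_of_forall_not_onChannel (hL : Odd L) {S : Finset (Fin M × ZMod L)}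
    (hS : #S = 3) (hch : ∀ i, ¬ OnChannel i S) : #(diffSet S) = 6 := by
  rw [diffSet, card_image_of_injOn (injOn_pairDiff_offDiag hL hS.le hch), offDiag_card,
    hS]

theorem mk_mem_diffSet_of_onChannel [NeZero L] {S : Finset (Fin M × ZMod L)} {i : Fin M}
    (hL : L < 2 * #S) (hS : OnChannel i S) {d : ZMod L} (hd : d ≠ 0) :
    (i, i, d) ∈ diffSet S := by
  have hinj : Set.InjOn Prod.snd (S : Set (Fin M × ZMod L)) := fun x hx y hy hxy =>
    Prod.ext ((hS x hx).trans (hS y hy).symm) hxy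
  obtain ⟨a, ha, b, hb, hab⟩ :=
    ZMod.exists_sub_eq_of_lt_two_mul_card (s := S.image Prod.snd)
      (by rwa [card_image_of_injOn hinj]) d
  obtain ⟨x, hx, rfl⟩ := mem_image.1 ha
  obtain ⟨y, hy, rfl⟩ := mem_image.1 hb
  have hxy : x ≠ y := by
    rintro rfl
    exact hd (hab ▸ sub_self x.2)
  simpa [pairDiff, hS x hx, hS y hy, hab] using pairDiff_mem_diffSet hx hy hxy

theorem card_diffSet_of_onChannel [NeZero L] {S : Finset (Fin M × ZMod L)} {i : Fin M}
    (hL : L < 2 * #S) (hS : OnChannel i S) : L - 1 ≤ #(diffSet S) :=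
  calc L - 1 = #((univ.erase (0 : ZMod L)).image fun d => (i, i, d)) := by
        rw [card_image_of_injective _ fun d d' h => by simpa using h,
          card_erase_of_mem (mem_univ _), card_univ, ZMod.card]
    _ ≤ #(diffSet S) := card_le_card fun t ht => by
        obtain ⟨d, hd, rfl⟩ := mem_image.1 ht
        exact mk_mem_diffSet_of_onChannel hL hS (ne_of_mem_erase hd)

theorem _root_.IsMCCAC.card_filter_onChannel_le_one [NeZero L] (hL : 1 < L) {w : ℕ}
    {C : Finset (Finset (Fin M × ZMod L))} (hC : IsMCCAC M L w C) (hw : L < 2 * w)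
    (i : Fin M) : #(C.filter (OnChannel i)) ≤ 1 := by
  have : Nontrivial (ZMod L) := ZMod.nontrivial_iff.2 hL.ne'
  rw [card_le_one]
  intro S hS T hT
  rw [mem_filter] at hS hT
  by_contra hST
  exact disjoint_left.1 (hC.disjoint_diffSet hS.1 hT.1 hST)
    (mk_mem_diffSet_of_onChannel (hC.1 S hS.1 ▸ hw) hS.2 one_ne_zero)
    (mk_mem_diffSet_of_onChannel (hC.1 T hT.1 ▸ hw) hT.2 one_ne_zero)

theorem _root_.IsMCCAC.card_filter_exists_onChannel_le [NeZero L] (hL : 1 < L) {w : ℕ}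
    {C : Finset (Finset (Fin M × ZMod L))} (hC : IsMCCAC M L w C) (hw : L < 2 * w) :
    #(C.filter fun S => ∃ i, OnChannel i S) ≤ M :=
  calc #(C.filter fun S => ∃ i, OnChannel i S)
      = #(univ.biUnion fun i => C.filter (OnChannel i)) := by
        congr 1; ext S; simp
    _ ≤ ∑ i, #(C.filter (OnChannel i)) := card_biUnion_le
    _ ≤ ∑ _i : Fin M, 1 := sum_le_sum fun i _ => hC.card_filter_onChannel_le_one hL hw i
    _ = M := by simp

theorem _root_.IsMCCAC.six_mul_card_le {C : Finset (Finset (Fin M × ZMod 5))}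
    (hC : IsMCCAC M 5 3 C) : 6 * #C ≤ 5 * M * M + 2 * M := by
  set single := C.filter fun S => ∃ i, OnChannel i S
  set multi := C.filter fun S => ¬ ∃ i, OnChannel i S
  have hsingle : #single * 4 ≤ ∑ S ∈ single, #(diffSet S) :=
    card_nsmul_le_sum single _ 4 fun S hS => by
      obtain ⟨hSC, i, hi⟩ := mem_filter.1 hS
      exact card_diffSet_of_onChannel (by rw [hC.1 S hSC]; norm_num) hi
  have hmulti : #multi * 6 ≤ ∑ S ∈ multi, #(diffSet S) :=
    card_nsmul_le_sum multi _ 6 fun S hS => by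
      obtain ⟨hSC, hS⟩ := mem_filter.1 hS
      exact (card_diffSet_of_forall_not_onChannel (by decide) (hC.1 S hSC) (not_exists.1 hS)).ge
  have htotal := hC.sum_card_diffSet_le
  rw [← sum_filter_add_sum_filter_not C fun S => ∃ i, OnChannel i S] at htotal
  have hk : #single ≤ M := hC.card_filter_exists_onChannel_le (by norm_num) (by norm_num)
  have hsplit : #single + #multi = #C := card_filter_add_card_filter_not _
  linarith

def code353 : Finset (Finset (Fin 3 × ZMod 5)) :=
  { {(0, 0), (0, 1), (0, 2)}, {(1, 0), (1, 1), (1, 2)}, {(2, 0), (2, 1), (2, 2)},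
    {(0, 0), (1, 0), (2, 0)}, {(0, 0), (1, 1), (2, 2)}, {(0, 0), (1, 2), (2, 4)},
    {(0, 0), (1, 3), (2, 1)}, {(0, 0), (1, 4), (2, 3)} }

theorem isMCCAC_code353 : IsMCCAC 3 5 3 code353 := by
  simp only [IsMCCAC, code353, mem_insert, mem_singleton, forall_eq_or_imp, forall_eq]
  and_intros <;> decide

theorem card_code353 : #code353 = 8 := by decide

end MCCAC

theorem stmt15 :
    (∃ C : Finset (Finset (Fin 3 × ZMod 5)), IsMCCAC 3 5 3 C ∧ C.card = 8) ∧
    (∀ C : Finset (Finset (Fin 3 × ZMod 5)), IsMCCAC 3 5 3 C → C.card ≤ 8) := by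
  refine ⟨⟨MCCAC.code353, MCCAC.isMCCAC_code353, MCCAC.card_code353⟩, fun C hC => ?_⟩
  have := hC.six_mul_card_le
  omega
end

section
/- Let M, L, w be positive integers and let S₁, …, S_K be scheduling patterns, i.e., w-element subsets of Fin M × ZMod L. The corresponding M × L zero-one arrays form an MC-CAC(M, L, w) (every cyclic-shift cross-correlation between distinct arrays is at most 1) if and only if for every pair of channel indices i₁, i₂ ∈ Fin M, the difference sets D_{S₁}(i₁,i₂), …, D_{S_K}(i₁,i₂) are pairwise disjoint, where D_S(i₁,i₂) = { t₁ - t₂ mod L : (i₁,t₁) ∈ S, (i₂,t₂) ∈ S }, with 0 removed from the set when i₁ = i₂. -/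
/-- The `(i₁, i₂)` set of differences of a scheduling pattern `S`:
differences `t₁ - t₂` with `(i₁, t₁) ∈ S` and `(i₂, t₂) ∈ S`, with `0`
removed when `i₁ = i₂`. -/
def diffSet {M L : ℕ} (S : Finset (Fin M × ZMod L)) (i₁ i₂ : Fin M) :
    Finset (ZMod L) :=
  if i₁ = i₂ then
    (((S ×ˢ S).filter fun p => p.1.1 = i₁ ∧ p.2.1 = i₂).image
      fun p => p.1.2 - p.2.2).erase 0
  else
    ((S ×ˢ S).filter fun p => p.1.1 = i₁ ∧ p.2.1 = i₂).image
      fun p => p.1.2 - p.2.2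

lemma mem_diffSet {M L : ℕ} {S : Finset (Fin M × ZMod L)} {i₁ i₂ : Fin M}
    {d : ZMod L} :
    d ∈ diffSet S i₁ i₂ ↔
      ((i₁ = i₂ → d ≠ 0) ∧ ∃ t₁ t₂, (i₁, t₁) ∈ S ∧ (i₂, t₂) ∈ S ∧ t₁ - t₂ = d) := by
  unfold diffSet
  split_ifs with h
  · simp only [Finset.mem_erase, Finset.mem_image, Finset.mem_filter, Finset.mem_product]
    constructor
    · rintro ⟨hd, ⟨p, q⟩, ⟨⟨hp, hq⟩, hp1, hq1⟩, rfl⟩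
      exact ⟨fun _ => hd, p.2, q.2,
        by rw [← hp1]; simpa using hp, by rw [← hq1]; simpa using hq, rfl⟩
    · rintro ⟨hd, t₁, t₂, h1, h2, rfl⟩
      exact ⟨hd h, ⟨(i₁, t₁), (i₂, t₂)⟩, ⟨⟨h1, h2⟩, rfl, rfl⟩, rfl⟩
  · simp only [Finset.mem_image, Finset.mem_filter, Finset.mem_product]
    constructor
    · rintro ⟨⟨p, q⟩, ⟨⟨hp, hq⟩, hp1, hq1⟩, rfl⟩
      exact ⟨fun hh => absurd hh h, p.2, q.2,
        by rw [← hp1]; simpa using hp, by rw [← hq1]; simpa using hq, rfl⟩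
    · rintro ⟨hd, t₁, t₂, h1, h2, rfl⟩
      exact ⟨⟨(i₁, t₁), (i₂, t₂)⟩, ⟨⟨h1, h2⟩, rfl, rfl⟩, rfl⟩

theorem stmt18 (M L w K : ℕ) (hM : 0 < M) (hL : 0 < L) (hw : 0 < w)
    (S : Fin K → Finset (Fin M × ZMod L))
    (hweight : ∀ k, (S k).card = w)
    (hinequiv : ∀ k ℓ : Fin K, k ≠ ℓ → ∀ τ : ZMod L,
      (S k).image (fun p => (p.1, p.2 + τ)) ≠ S ℓ) :
    (∀ k ℓ : Fin K, k ≠ ℓ → ∀ τ : ZMod L,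
        ((S k).filter fun p => (p.1, p.2 + τ) ∈ S ℓ).card ≤ 1) ↔
    (∀ i₁ i₂ : Fin M, ∀ k ℓ : Fin K, k ≠ ℓ →
        Disjoint (diffSet (S k) i₁ i₂) (diffSet (S ℓ) i₁ i₂)) := by
  constructor
  · intro hcorr i₁ i₂ k ℓ hkl
    rw [Finset.disjoint_left]
    intro d hdk hdl
    rw [mem_diffSet] at hdk hdl
    obtain ⟨hd0, a, b, ha, hb, hab⟩ := hdk
    obtain ⟨-, c, e, hc, he, hce⟩ := hdl
    have h1 : (i₁, a) ∈ (S k).filter fun p => (p.1, p.2 + (c - a)) ∈ S ℓ := by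
      refine Finset.mem_filter.mpr ⟨ha, ?_⟩
      simpa using hc
    have h2 : (i₂, b) ∈ (S k).filter fun p => (p.1, p.2 + (c - a)) ∈ S ℓ := by
      refine Finset.mem_filter.mpr ⟨hb, ?_⟩
      have : b + (c - a) = e := by
        have : a - b = c - e := by rw [hab, hce]
        linear_combination -this
      simpa [this] using he
    have hne : (i₁, a) ≠ (i₂, b) := by
      intro hEq
      rw [Prod.mk.injEq] at hEq
      have := hd0 hEq.1
      apply this
      rw [← hab, hEq.2, sub_self]
    have : 1 < ((S k).filter fun p => (p.1, p.2 + (c - a)) ∈ S ℓ).card :=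
      Finset.one_lt_card.mpr ⟨_, h1, _, h2, hne⟩
    exact absurd (hcorr k ℓ hkl (c - a)) (by omega)
  · intro hdisj k ℓ hkl τ
    by_contra hcard
    push_neg at hcard
    obtain ⟨p, hp, q, hq, hpq⟩ := Finset.one_lt_card.mp hcard
    rw [Finset.mem_filter] at hp hq
    obtain ⟨hpk, hpl⟩ := hp
    obtain ⟨hqk, hql⟩ := hq
    have hd : (p.2 - q.2 : ZMod L) ∈ diffSet (S k) p.1 q.1 := by
      rw [mem_diffSet]
      refine ⟨?_, p.2, q.2, by simpa using hpk, by simpa using hqk, rfl⟩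
      intro h12 h0
      exact hpq (Prod.ext h12 (sub_eq_zero.mp h0))
    have hd' : (p.2 - q.2 : ZMod L) ∈ diffSet (S ℓ) p.1 q.1 := by
      rw [mem_diffSet]
      refine ⟨?_, p.2 + τ, q.2 + τ, hpl, hql, by ring⟩
      intro h12 h0
      exact hpq (Prod.ext h12 (sub_eq_zero.mp h0))
    exact Finset.disjoint_left.mp (hdisj p.1 q.1 k ℓ hkl) hd hd'
end
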